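/- arXiv:1711.01698 — 6 statements merged into one kernel-verified Lean document; each statement's English description precedes it below -/
import Mathlib

section
/- Let Λ be a k-graph. For each η, ρ ∈ Λ and m ∈ ℕ^k with m ≤ d(ρ), Λ^min(η, ρ) = {(αγ, δ) : (α, β) ∈ Λ^min(η, ρ(0,m)) and (γ, δ) ∈ Λ^min(β, ρ(m, d(ρ)))}. -/
/-- A `k`-graph: a countable small category `Λ` together with a degree functor
`d : Λ → ℕᵏ` satisfying the unique factorisation property.  Morphisms are called
paths; `comp μ ν` is the composite `μν`, only meaningful when `s μ = r ν`. -/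
structure KGraph (k : ℕ) where
  Path : Type
  Obj : Type
  pathCountable : Countable Path
  r : Path → Obj
  s : Path → Obj
  d : Path → Fin k → ℕ
  comp : Path → Path → Path
  ident : Obj → Path
  r_ident : ∀ v, r (ident v) = v
  s_ident : ∀ v, s (ident v) = v
  d_ident : ∀ v, d (ident v) = 0
  r_comp : ∀ μ ν, s μ = r ν → r (comp μ ν) = r μ
  s_comp : ∀ μ ν, s μ = r ν → s (comp μ ν) = s ν
  d_comp : ∀ μ ν, s μ = r ν → d (comp μ ν) = d μ + d ν
  ident_comp : ∀ lam, comp (ident (r lam)) lam = lam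
  comp_ident : ∀ lam, comp lam (ident (s lam)) = lam
  comp_assoc : ∀ lam μ ν, s lam = r μ → s μ = r ν →
    comp (comp lam μ) ν = comp lam (comp μ ν)
  factor : ∀ (lam : Path) (m n : Fin k → ℕ), d lam = m + n →
    ∃! p : Path × Path, s p.1 = r p.2 ∧ d p.1 = m ∧ d p.2 = n ∧ lam = comp p.1 p.2

/-- The `i`-th standard generator `e_i` of `ℕᵏ`. -/
def eVec {k : ℕ} (i : Fin k) : Fin k → ℕ := Pi.single i 1

namespace KGraph

variable {k : ℕ} (G : KGraph k)

/-- `lam` extends `μ`, i.e. `lam ∈ μΛ`. -/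
def Extends (lam μ : G.Path) : Prop := ∃ α, G.s μ = G.r α ∧ lam = G.comp μ α

/-- `CE(μ,ν)`: common extensions of `μ` and `ν`. -/
def CE (μ ν : G.Path) : Set G.Path := {lam | G.Extends lam μ ∧ G.Extends lam ν}

/-- `MCE(μ,ν)`: minimal common extensions of `μ` and `ν` (degree `d μ ⊔ d ν`). -/
def MCE (μ ν : G.Path) : Set G.Path :=
  {lam | lam ∈ G.CE μ ν ∧ G.d lam = G.d μ ⊔ G.d ν}

/-- `Λ^min(μ,ν)`: pairs `(α,β)` with `μα = νβ ∈ MCE(μ,ν)`. -/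
def minPairs (μ ν : G.Path) : Set (G.Path × G.Path) :=
  {p | G.s μ = G.r p.1 ∧ G.s ν = G.r p.2 ∧ G.comp μ p.1 = G.comp ν p.2 ∧
    G.comp μ p.1 ∈ G.MCE μ ν}

/-- `Λ` is finitely aligned if each `Λ^min(μ,ν)` is finite. -/
def FinitelyAligned : Prop := ∀ μ ν : G.Path, (G.minPairs μ ν).Finite

/-- `Λ` is locally-convex. -/
def LocallyConvex : Prop :=
  ∀ (i j : Fin k), i ≠ j → ∀ lam μ : G.Path,
    G.d lam = eVec i → G.d μ = eVec j → G.r lam = G.r μ →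
    (∃ η, G.d η = eVec j ∧ G.r η = G.s lam) ∧
    (∃ η, G.d η = eVec i ∧ G.r η = G.s μ)

/-- `Λ^{≤ n}`. -/
def LeSet (n : Fin k → ℕ) : Set G.Path :=
  {lam | G.d lam ≤ n ∧
    ∀ i, G.d lam i < n i → ¬∃ η, G.d η = eVec i ∧ G.r η = G.s lam}

open Classical in
/-- Split a path `lam` at degree `m ≤ d lam` into `(lam(0,m), lam(m, d lam))`. -/
noncomputable def split (lam : G.Path) (m : Fin k → ℕ) : G.Path × G.Path :=
  if h : m ≤ G.d lam then
    (G.factor lam m (G.d lam - m)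
      (funext fun i => (Nat.add_sub_cancel' ((Pi.le_def.mp h) i)).symm)).exists.choose
  else (lam, lam)

/-- The segment `lam(m,n)` (for `m ≤ n ≤ d lam`), of degree `n - m`. -/
noncomputable def seg (lam : G.Path) (m n : Fin k → ℕ) : G.Path :=
  (G.split (G.split lam n).1 m).2

end KGraph


namespace KGraph

variable {k : ℕ} (G : KGraph k)

lemma factor_unique {lam a b a' b' : G.Path}
    (h1 : G.s a = G.r b) (h2 : lam = G.comp a b)
    (h1' : G.s a' = G.r b') (h2' : lam = G.comp a' b')
    (hd : G.d a = G.d a') : a = a' ∧ b = b' := by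
  have hdl : G.d lam = G.d a + G.d b := h2 ▸ G.d_comp a b h1
  obtain ⟨p, hp, hup⟩ := G.factor lam (G.d a) (G.d b) hdl
  have hdl' : G.d lam = G.d a' + G.d b' := h2' ▸ G.d_comp a' b' h1'
  have hdb' : G.d b' = G.d b := by
    funext i
    have h3 := congrFun hdl i
    have h4 := congrFun hdl' i
    have h5 := congrFun hd i
    simp only [Pi.add_apply] at h3 h4
    omega
  have e1 := hup (a, b) ⟨h1, rfl, rfl, h2⟩
  have e2 := hup (a', b') ⟨h1', hd.symm, hdb', h2'⟩
  have e := e1.trans e2.symm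
  exact ⟨congrArg Prod.fst e, congrArg Prod.snd e⟩

lemma split_spec {lam : G.Path} {m : Fin k → ℕ} (hm : m ≤ G.d lam) :
    G.s (G.split lam m).1 = G.r (G.split lam m).2 ∧ G.d (G.split lam m).1 = m ∧
    G.d (G.split lam m).2 = G.d lam - m ∧
    lam = G.comp (G.split lam m).1 (G.split lam m).2 := by
  unfold split
  rw [dif_pos hm]
  exact (G.factor lam m (G.d lam - m)
    (funext fun i => (Nat.add_sub_cancel' ((Pi.le_def.mp hm) i)).symm)).exists.choose_spec

lemma d_zero_ident {x : G.Path} (h : G.d x = 0) : x = G.ident (G.r x) := by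
  have hfac : G.d x = 0 + 0 := by simp [h]
  obtain ⟨p, hp, hup⟩ := G.factor x 0 0 hfac
  have e1 := hup (G.ident (G.r x), x)
    ⟨by rw [G.s_ident], G.d_ident _, h, (G.ident_comp x).symm⟩
  have e2 := hup (x, G.ident (G.s x))
    ⟨(G.r_ident _).symm, h, G.d_ident _, (G.comp_ident x).symm⟩
  exact (congrArg Prod.fst (e1.trans e2.symm)).symm

lemma split_zero (lam : G.Path) : (G.split lam 0).2 = lam := by
  have hm : (0 : Fin k → ℕ) ≤ G.d lam := fun i => Nat.zero_le _
  obtain ⟨hs, hd1, hd2, hc⟩ := G.split_spec hm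
  have h1 : (G.split lam 0).1 = G.ident (G.r (G.split lam 0).1) := G.d_zero_ident hd1
  have hr : G.r (G.split lam 0).2 = G.r (G.split lam 0).1 := by
    rw [← hs]; conv_lhs => rw [h1, G.s_ident]
  calc (G.split lam 0).2 = G.comp (G.ident (G.r (G.split lam 0).2)) (G.split lam 0).2 :=
        (G.ident_comp _).symm
    _ = G.comp (G.split lam 0).1 (G.split lam 0).2 := by rw [hr, ← h1]
    _ = lam := hc.symm

lemma split_top (lam : G.Path) : (G.split lam (G.d lam)).1 = lam := by
  obtain ⟨hs, hd1, hd2, hc⟩ := G.split_spec (le_refl (G.d lam))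
  have hz : G.d (G.split lam (G.d lam)).2 = 0 := by rw [hd2]; simp
  have h2 := G.d_zero_ident hz
  symm
  calc lam = G.comp (G.split lam (G.d lam)).1 (G.split lam (G.d lam)).2 := hc
    _ = G.comp (G.split lam (G.d lam)).1
        (G.ident (G.s (G.split lam (G.d lam)).1)) := by rw [h2, ← hs]
    _ = (G.split lam (G.d lam)).1 := G.comp_ident _

lemma seg_zero (ρ : G.Path) (m : Fin k → ℕ) : G.seg ρ 0 m = (G.split ρ m).1 :=
  G.split_zero _

lemma seg_top (ρ : G.Path) (m : Fin k → ℕ) : G.seg ρ m (G.d ρ) = (G.split ρ m).2 := by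
  unfold seg
  rw [G.split_top]

end KGraph

/-- for `η, ρ ∈ Λ` and `m ≤ d ρ`,
`Λ^min(η,ρ) = {(αγ, δ) : (α,β) ∈ Λ^min(η, ρ(0,m)), (γ,δ) ∈ Λ^min(β, ρ(m, d ρ))}`. -/
theorem stmt5 {k : ℕ} (G : KGraph k) (hfa : G.FinitelyAligned) (η ρ : G.Path)
    (m : Fin k → ℕ) (hm : m ≤ G.d ρ) :
    G.minPairs η ρ =
      {q | ∃ p₁ ∈ G.minPairs η (G.seg ρ 0 m),
           ∃ p₂ ∈ G.minPairs p₁.2 (G.seg ρ m (G.d ρ)),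
           q = (G.comp p₁.1 p₂.1, p₂.2)} := by
  classical
  have hmax : ∀ x y : ℕ, x ⊔ y = max x y := fun _ _ => rfl
  obtain ⟨hsστ, hdσ, hdτ, hcρ⟩ := G.split_spec hm
  set σ := (G.split ρ m).1 with hσdef
  set τ := (G.split ρ m).2 with hτdef
  have hseg0 : G.seg ρ 0 m = σ := G.seg_zero ρ m
  have hsegm : G.seg ρ m (G.d ρ) = τ := G.seg_top ρ m
  have hsρτ : G.s ρ = G.s τ := by rw [hcρ]; exact G.s_comp σ τ hsστ
  have hrρσ : G.r ρ = G.r σ := by rw [hcρ]; exact G.r_comp σ τ hsστ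
  ext q
  obtain ⟨ξ, δ⟩ := q
  simp only [KGraph.minPairs, KGraph.MCE, KGraph.CE, KGraph.Extends, Set.mem_setOf_eq,
    hseg0, hsegm]
  constructor
  · rintro ⟨h1, h2, h3, -, hdeg⟩
    have hτδ : G.s τ = G.r δ := by rw [← hsρτ]; exact h2
    have hdξ : G.d η + G.d ξ = G.d η ⊔ G.d ρ := by
      rw [← G.d_comp η ξ h1]; exact hdeg
    have hdδ : G.d ρ + G.d δ = G.d η ⊔ G.d ρ := by
      rw [← G.d_comp ρ δ h2, ← h3]; exact hdeg
    -- split ξ at n := (d η ⊔ m) - d η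
    have hn : (G.d η ⊔ m) - G.d η ≤ G.d ξ := by
      intro i
      have e1 := congrFun hdξ i
      simp only [Pi.add_apply, Pi.sup_apply, Pi.sub_apply] at e1 ⊢
      rw [hmax] at e1 ⊢
      have hmi : m i ≤ G.d ρ i := hm i
      omega
    obtain ⟨hsαγ, hdα, hdγ, hcξ⟩ := G.split_spec hn
    set α := (G.split ξ ((G.d η ⊔ m) - G.d η)).1 with hαdef
    set γ := (G.split ξ ((G.d η ⊔ m) - G.d η)).2 with hγdef
    have hηα : G.s η = G.r α := by rw [h1, hcξ]; exact G.r_comp α γ hsαγ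
    -- split (comp τ δ) at n' := (d η ⊔ m) - m
    have hdτδ : G.d (G.comp τ δ) = G.d τ + G.d δ := G.d_comp τ δ hτδ
    have hn' : (G.d η ⊔ m) - m ≤ G.d (G.comp τ δ) := by
      intro i
      have e1 := congrFun hdτδ i
      have e2 := congrFun hdτ i
      have e3 := congrFun hdδ i
      simp only [Pi.add_apply, Pi.sup_apply, Pi.sub_apply] at e1 e2 e3 ⊢
      rw [hmax] at e3 ⊢
      have hmi : m i ≤ G.d ρ i := hm i
      omega
    obtain ⟨hsβγ', hdβ, hdγ', hcτδ⟩ := G.split_spec hn'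
    set β := (G.split (G.comp τ δ) ((G.d η ⊔ m) - m)).1 with hβdef
    set γ' := (G.split (G.comp τ δ) ((G.d η ⊔ m) - m)).2 with hγ'def
    have hσβ : G.s σ = G.r β := by
      rw [hsστ, ← G.r_comp τ δ hτδ, hcτδ]; exact G.r_comp β γ' hsβγ'
    -- two factorisations of comp η ξ at degree d η ⊔ m
    have hF1s : G.s (G.comp η α) = G.r γ := by rw [G.s_comp η α hηα]; exact hsαγ
    have hF2s : G.s (G.comp σ β) = G.r γ' := by rw [G.s_comp σ β hσβ]; exact hsβγ'
    have hF1c : G.comp η ξ = G.comp (G.comp η α) γ := by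
      rw [hcξ]; exact (G.comp_assoc η α γ hηα hsαγ).symm
    have hF2c : G.comp η ξ = G.comp (G.comp σ β) γ' := by
      rw [h3, hcρ, G.comp_assoc σ τ δ hsστ hτδ, hcτδ]
      exact (G.comp_assoc σ β γ' hσβ hsβγ').symm
    have hFd : G.d (G.comp η α) = G.d (G.comp σ β) := by
      rw [G.d_comp η α hηα, G.d_comp σ β hσβ]
      funext i
      have e1 := congrFun hdα i
      have e2 := congrFun hdβ i
      have e3 := congrFun hdσ i
      simp only [Pi.add_apply, Pi.sup_apply, Pi.sub_apply] at e1 e2 e3 ⊢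
      rw [hmax] at e1 e2
      have hmi : m i ≤ G.d ρ i := hm i
      omega
    obtain ⟨hfst, hsnd⟩ := G.factor_unique hF1s hF1c hF2s hF2c hFd
    -- assemble
    have hβγ : G.s β = G.r γ := by rw [hsnd]; exact hsβγ'
    have hcβγ : G.comp β γ = G.comp τ δ := by rw [hsnd]; exact hcτδ.symm
    refine ⟨(α, β), ⟨hηα, hσβ, hfst, ⟨⟨α, hηα, rfl⟩, ⟨β, hσβ, hfst⟩⟩, ?_⟩,
      (γ, δ), ⟨hβγ, hτδ, hcβγ, ⟨⟨γ, hβγ, rfl⟩, ⟨δ, hτδ, hcβγ⟩⟩, ?_⟩, ?_⟩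
    · -- d (comp η α) = d η ⊔ d σ
      rw [G.d_comp η α hηα, hdσ]
      funext i
      have e1 := congrFun hdα i
      simp only [Pi.add_apply, Pi.sup_apply, Pi.sub_apply] at e1 ⊢
      rw [hmax] at e1 ⊢
      omega
    · -- d (comp β γ) = d β ⊔ d τ
      rw [hcβγ, hdτδ]
      funext i
      have e2 := congrFun hdτ i
      have e3 := congrFun hdδ i
      have e4 := congrFun hdβ i
      simp only [Pi.add_apply, Pi.sup_apply, Pi.sub_apply] at e2 e3 e4 ⊢
      rw [hmax] at e3 e4 ⊢
      have hmi : m i ≤ G.d ρ i := hm i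
      omega
    · -- (ξ, δ) = (comp α γ, δ)
      simp only [Prod.mk.injEq]
      exact ⟨hcξ, trivial⟩
  · rintro ⟨⟨α, β⟩, ⟨hA1, hA2, hA3, -, hAd⟩, ⟨γ, δ'⟩, ⟨hB1, hB2, hB3, -, hBd⟩, heq⟩
    simp only [Prod.mk.injEq] at heq
    obtain ⟨hξ, hδ⟩ := heq
    subst hδ; subst hξ
    have hαγ : G.s α = G.r γ := by
      rw [← G.s_comp η α hA1, hA3, G.s_comp σ β hA2]; exact hB1
    have hηαγ : G.s η = G.r (G.comp α γ) := by
      rw [G.r_comp α γ hαγ]; exact hA1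
    have hτδ : G.s τ = G.r δ := hB2
    refine ⟨hηαγ, ?_, ?_, ⟨⟨G.comp α γ, hηαγ, rfl⟩, ?_⟩, ?_⟩
    · rw [hsρτ]; exact hτδ
    · -- comp η (comp α γ) = comp ρ δ
      rw [← G.comp_assoc η α γ hA1 hαγ, hA3, G.comp_assoc σ β γ hA2 hB1, hB3,
        ← G.comp_assoc σ τ δ hsστ hτδ, ← hcρ]
    · -- extends ρ
      refine ⟨δ, by rw [hsρτ]; exact hτδ, ?_⟩
      rw [← G.comp_assoc η α γ hA1 hαγ, hA3, G.comp_assoc σ β γ hA2 hB1, hB3,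
        ← G.comp_assoc σ τ δ hsστ hτδ, ← hcρ]
    · -- degree
      rw [G.d_comp η (G.comp α γ) hηαγ, G.d_comp α γ hαγ]
      have e1 : G.d η + G.d α = G.d η ⊔ G.d σ := by
        rw [← G.d_comp η α hA1]; exact hAd
      have e2 : G.d β + G.d γ = G.d β ⊔ G.d τ := by
        rw [← G.d_comp β γ hB1]; exact hBd
      have e3 : G.d σ + G.d β = G.d η ⊔ G.d σ := by
        rw [← G.d_comp σ β hA2, ← hA3, G.d_comp η α hA1]; exact e1
      funext i
      have f1 := congrFun e1 i
      have f2 := congrFun e2 i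
      have f3 := congrFun e3 i
      have f4 := congrFun hdσ i
      have f5 := congrFun hdτ i
      simp only [Pi.add_apply, Pi.sup_apply, Pi.sub_apply] at f1 f2 f3 f4 f5 ⊢
      rw [hmax] at f1 f2 f3 ⊢
      have hmi : m i ≤ G.d ρ i := hm i
      omega
end

section
/- Let Λ be a locally-convex k-graph. If μ ∈ Λ^{e_i} and ν ∈ r(μ)Λ with d(ν)_i = 0, then s(ν)Λ^{e_i} ≠ ∅. -/
/-- Degree-zero paths are identities. -/
lemma KGraph.deg_zero_ident {k : ℕ} (G : KGraph k) (ν : G.Path)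
    (h : G.d ν = 0) : ν = G.ident (G.r ν) := by
  have hfac := G.factor ν 0 0 (by rw [h]; simp)
  obtain ⟨p, hp, hup⟩ := hfac
  have h1 := hup (G.ident (G.r ν), ν)
    ⟨by rw [G.s_ident], G.d_ident _, h, (G.ident_comp ν).symm⟩
  have h2 := hup (ν, G.ident (G.s ν))
    ⟨by rw [G.r_ident], h, G.d_ident _, (G.comp_ident ν).symm⟩
  have := h1.trans h2.symm
  exact (congrArg Prod.fst this).symm

/-- in a locally-convex `k`-graph, if `μ ∈ Λ^{e_i}` and
`ν ∈ r(μ)Λ` with `d(ν)_i = 0`, then `s(ν)Λ^{e_i} ≠ ∅`. -/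
theorem stmt6 {k : ℕ} (G : KGraph k) (hlc : G.LocallyConvex) (i : Fin k)
    (μ ν : G.Path) (hμ : G.d μ = eVec i) (hr : G.r ν = G.r μ)
    (hν : G.d ν i = 0) :
    ∃ η, G.d η = eVec i ∧ G.r η = G.s ν := by
  obtain ⟨n, hn⟩ : ∃ n, (∑ j, G.d ν j) = n := ⟨_, rfl⟩
  induction n using Nat.strong_induction_on generalizing μ ν with
  | _ n ih =>
  by_cases h0 : G.d ν = 0
  · have hid := G.deg_zero_ident ν h0
    refine ⟨μ, hμ, ?_⟩
    rw [hid, G.s_ident, hr]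
  · obtain ⟨j, hj⟩ : ∃ j, 0 < G.d ν j := by
      by_contra h; push_neg at h
      exact h0 (funext fun j => Nat.le_zero.mp (h j))
    have hij : i ≠ j := fun h => by rw [h] at hν; omega
    have hfac := (G.factor ν (eVec j) (G.d ν - eVec j) ?_).exists
    · obtain ⟨⟨lam, ν'⟩, hsr, hd1, hd2, hcomp⟩ := hfac
      have hrlam : G.r lam = G.r μ := by
        rw [← hr, hcomp, G.r_comp _ _ hsr]
      obtain ⟨_, ⟨η, hηd, hηr⟩⟩ := hlc i j hij μ lam hμ hd1 hrlam.symm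
      have hdsum : G.d ν = G.d lam + G.d ν' := by
        rw [hcomp]; exact G.d_comp _ _ hsr
      have hν'i : G.d ν' i = 0 := by
        have := congrFun hdsum i
        rw [hd1] at this
        simp only [eVec, Pi.single_apply, if_neg hij, Pi.add_apply] at this ⊢
        omega
      have hrν' : G.r ν' = G.r η := by rw [hηr, hsr]
      have hlt : (∑ j, G.d ν' j) < n := by
        rw [← hn]
        have : ∀ j', G.d ν j' = G.d lam j' + G.d ν' j' :=
          fun j' => by rw [hdsum]; rfl
        have hsum : (∑ j', G.d ν j') = (∑ j', G.d lam j') + ∑ j', G.d ν' j' := by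
          rw [← Finset.sum_add_distrib]; exact Finset.sum_congr rfl fun x _ => this x
        have hlam : 0 < ∑ j', G.d lam j' :=
          Finset.sum_pos' (fun _ _ => Nat.zero_le _)
            ⟨j, Finset.mem_univ j, by rw [hd1]; simp [eVec]⟩
        omega
      obtain ⟨η2, hη2d, hη2r⟩ := ih _ hlt η ν' hηd hrν' hν'i rfl
      refine ⟨η2, hη2d, ?_⟩
      rw [hη2r, hcomp, G.s_comp _ _ hsr]
    · funext i'
      simp only [Pi.add_apply, Pi.sub_apply, eVec, Pi.single_apply]
      by_cases h : i' = j <;> simp [h] <;> omega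
end

section
/- Let Λ be a finitely aligned k-graph, v ∈ Λ^0, and E ⊆ vΛ a finite exhaustive set in Λ. Then for any μ ∈ vΛ, the set Ext_Λ(μ; E) := ⋃_{λ∈E} {α ∈ s(μ)Λ : μα ∈ MCE(μ, λ)} is a finite exhaustive subset of s(μ)Λ. -/
namespace KGraph

variable {k : ℕ} {G : KGraph k}

theorem comp_left_cancel {μ x y : G.Path} (hx : G.s μ = G.r x) (hy : G.s μ = G.r y)
    (h : G.comp μ x = G.comp μ y) : x = y := by
  have hdx := G.d_comp μ x hx
  have hdy := G.d_comp μ y hy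
  have hd : G.d x = G.d y := by
    have : G.d μ + G.d x = G.d μ + G.d y := by rw [← hdx, ← hdy, h]
    exact add_left_cancel this
  obtain ⟨p, _, hup⟩ := G.factor (G.comp μ x) (G.d μ) (G.d x) hdx
  have h1 := hup (μ, x) ⟨hx, rfl, rfl, rfl⟩
  have h2 := hup (μ, y) ⟨hy, rfl, hd.symm, h⟩
  exact congrArg Prod.snd (h1.trans h2.symm)

theorem prefix_unique {lam ρ ρ' γ γ' : G.Path} (h1 : G.s ρ = G.r γ) (h2 : G.s ρ' = G.r γ')
    (h3 : lam = G.comp ρ γ) (h4 : lam = G.comp ρ' γ') (h5 : G.d ρ = G.d ρ') :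
    ρ = ρ' := by
  have e1 := G.d_comp ρ γ h1
  have e2 := G.d_comp ρ' γ' h2
  have hdγ : G.d γ = G.d γ' := by
    have : G.d ρ + G.d γ = G.d ρ' + G.d γ' := by rw [← e1, ← e2, ← h3, ← h4]
    rw [h5] at this; exact add_left_cancel this
  obtain ⟨p, _, hup⟩ := G.factor lam (G.d ρ) (G.d γ) (by rw [h3, e1])
  have A := hup (ρ, γ) ⟨h1, rfl, rfl, h3⟩
  have B := hup (ρ', γ') ⟨h2, h5.symm, hdγ.symm, h4⟩
  exact congrArg Prod.fst (A.trans B.symm)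

theorem prefix_factor {μ τ : G.Path} (hμτ : G.s μ = G.r τ) (m : Fin k → ℕ)
    (hm1 : G.d μ ≤ m) (hm2 : m ≤ G.d (G.comp μ τ)) :
    ∃ α γ, G.s μ = G.r α ∧ G.s (G.comp μ α) = G.r γ ∧
      G.d (G.comp μ α) = m ∧ G.comp μ τ = G.comp (G.comp μ α) γ := by
  have hd := G.d_comp μ τ hμτ
  have hdτ : G.d τ = (m - G.d μ) + (G.d τ - (m - G.d μ)) := by
    funext i
    have h2i : m i ≤ G.d (G.comp μ τ) i := hm2 i
    have h1i : G.d μ i ≤ m i := hm1 i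
    have hdi : G.d (G.comp μ τ) i = G.d μ i + G.d τ i := by rw [hd]; rfl
    simp only [Pi.add_apply, Pi.sub_apply]
    omega
  obtain ⟨⟨α, γ⟩, ⟨hs, hdα, hdγ, heq⟩, _⟩ := G.factor τ (m - G.d μ) (G.d τ - (m - G.d μ)) hdτ
  have hrα : G.s μ = G.r α := by rw [hμτ, heq, G.r_comp α γ hs]
  have hsμα : G.s (G.comp μ α) = G.r γ := by rw [G.s_comp μ α hrα, hs]
  refine ⟨α, γ, hrα, hsμα, ?_, ?_⟩
  · rw [G.d_comp μ α hrα, hdα]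
    funext i
    have h1i : G.d μ i ≤ m i := hm1 i
    simp only [Pi.add_apply, Pi.sub_apply]
    omega
  · rw [heq, ← G.comp_assoc μ α γ hrα hs]

end KGraph

/-- if `Λ` is finitely aligned, `E ⊆ vΛ` is finite and exhaustive,
and `μ ∈ vΛ`, then `Ext_Λ(μ; E) = ⋃_{lam ∈ E} {α ∈ s(μ)Λ : μα ∈ MCE(μ, lam)}`
is a finite exhaustive subset of `s(μ)Λ`. -/
theorem stmt10 {k : ℕ} (G : KGraph k) (hfa : G.FinitelyAligned) (v : G.Obj)
    (E : Set G.Path) (hEfin : E.Finite) (hEv : ∀ lam ∈ E, G.r lam = v)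
    (hex : ∀ μ : G.Path, G.r μ = v → ∃ ν ∈ E, (G.minPairs μ ν).Nonempty)
    (μ : G.Path) (hμ : G.r μ = v) :
    let Ext : Set G.Path :=
      {α | G.s μ = G.r α ∧ ∃ lam ∈ E, G.comp μ α ∈ G.MCE μ lam}
    Ext.Finite ∧ (∀ α ∈ Ext, G.r α = G.s μ) ∧
      ∀ σ : G.Path, G.r σ = G.s μ → ∃ α ∈ Ext, (G.minPairs σ α).Nonempty := by
  intro Ext
  refine ⟨?_, fun α hα => hα.1.symm, ?_⟩
  · -- finiteness
    have hsub : Ext ⊆ ⋃ lam ∈ E, Prod.fst '' (G.minPairs μ lam) := by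
      rintro α ⟨hr, lam, hlam, hmce⟩
      obtain ⟨β, hβ1, hβ2⟩ := hmce.1.2
      exact Set.mem_biUnion hlam ⟨(α, β), ⟨hr, hβ1, hβ2.symm ▸ rfl, hmce⟩, rfl⟩
    exact Set.Finite.subset (hEfin.biUnion fun lam _ => (hfa μ lam).image _) hsub
  · -- exhaustiveness
    intro σ hσ
    have hμσ : G.s μ = G.r σ := hσ.symm
    have hrv : G.r (G.comp μ σ) = v := (G.r_comp μ σ hμσ).trans hμ
    obtain ⟨ν, hνE, ⟨α', β⟩, hα'1, hβ1, heq, hmce⟩ := hex (G.comp μ σ) hrv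
    have hσα' : G.s σ = G.r α' := by rw [← G.s_comp μ σ hμσ]; exact hα'1
    set τ := G.comp σ α' with hτdef
    have hμτ : G.s μ = G.r τ := by rw [hμσ, G.r_comp σ α' hσα']
    have hassoc : G.comp (G.comp μ σ) α' = G.comp μ τ := G.comp_assoc μ σ α' hμσ hσα'
    -- the big path lam := μσα' = μτ = νβ
    have hdlam : G.d (G.comp μ τ) = G.d (G.comp μ σ) ⊔ G.d ν := by
      rw [← hassoc]; exact hmce.2
    set m := G.d μ ⊔ G.d ν with hmdef
    have hm1 : G.d μ ≤ m := le_sup_left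
    have hm2 : m ≤ G.d (G.comp μ τ) := by
      rw [hdlam]
      refine sup_le_sup_right ?_ _
      rw [G.d_comp μ σ hμσ]; exact le_self_add
    obtain ⟨α, γ, h1, h2, h3, h4⟩ := KGraph.prefix_factor hμτ m hm1 hm2
    -- μα = ν<something> : prefix of the same path at degree m starting from ν
    have hνeq : G.comp μ τ = G.comp ν β := by rw [← hassoc, heq]
    have hm1' : G.d ν ≤ m := le_sup_right
    have hm2' : m ≤ G.d (G.comp ν β) := by rw [← hνeq]; exact hm2
    obtain ⟨α₂, γ₂, h1', h2', h3', h4'⟩ := KGraph.prefix_factor hβ1 m hm1' hm2'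
    have hpre : G.comp μ α = G.comp ν α₂ :=
      KGraph.prefix_unique h2 h2' h4 (hνeq.trans h4') (h3.trans h3'.symm)
    have hmceα : G.comp μ α ∈ G.MCE μ ν :=
      ⟨⟨⟨α, h1, rfl⟩, ⟨α₂, h1', hpre⟩⟩, h3⟩
    have hαExt : α ∈ Ext := ⟨h1, ν, hνE, hmceα⟩
    -- now σα' = αγ
    have hsα : G.s α = G.r γ := by rw [← G.s_comp μ α h1]; exact h2
    have hτeq : τ = G.comp α γ := by
      refine KGraph.comp_left_cancel (μ := μ) hμτ (by rw [G.r_comp α γ hsα]; exact h1) ?_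
      rw [h4, G.comp_assoc μ α γ h1 hsα]
    set n := G.d σ ⊔ G.d α with hndef
    have hn1 : G.d σ ≤ n := le_sup_left
    have hn2 : n ≤ G.d τ := by
      refine sup_le ?_ ?_
      · rw [hτdef, G.d_comp σ α' hσα']; exact le_self_add
      · rw [hτeq, G.d_comp α γ hsα]; exact le_self_add
    have hn2' : n ≤ G.d (G.comp σ α') := hn2
    obtain ⟨a, g, ha1, ha2, ha3, ha4⟩ := KGraph.prefix_factor hσα' n hn1 hn2'
    have hn1'' : G.d α ≤ n := le_sup_right
    have hn2'' : n ≤ G.d (G.comp α γ) := by rw [← hτeq]; exact hn2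
    obtain ⟨b, g₂, hb1, hb2, hb3, hb4⟩ := KGraph.prefix_factor hsα n hn1'' hn2''
    have hστ : G.comp σ α' = G.comp α γ := hτeq
    have hpre2 : G.comp σ a = G.comp α b :=
      KGraph.prefix_unique ha2 hb2 ha4 (hστ.trans hb4) (ha3.trans hb3.symm)
    refine ⟨α, hαExt, (a, b), ha1, hb1, hpre2, ⟨⟨⟨a, ha1, rfl⟩, ⟨b, hb1, hpre2⟩⟩, ha3⟩⟩
end

section
/- Let Λ be a locally-convex finitely aligned k-graph and fix i ∈ {1,…,k}. Every finite exhaustive set of the (k−1)-graph Λ^i is also exhaustive in Λ; that is, FE(Λ^i) ⊆ FE(Λ). -/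
namespace KGraph

variable {k : ℕ} (G : KGraph k)

lemma eVec_apply {k : ℕ} (i j : Fin k) : eVec i j = if j = i then 1 else 0 := by
  simp [eVec, Pi.single_apply]

lemma extends_self (lam : G.Path) : G.Extends lam lam :=
  ⟨G.ident (G.s lam), (G.r_ident _).symm, (G.comp_ident lam).symm⟩

lemma extends_trans {lam μ ν : G.Path} (h1 : G.Extends lam μ) (h2 : G.Extends μ ν) :
    G.Extends lam ν := by
  obtain ⟨a, ha, hla⟩ := h1
  obtain ⟨b, hb, hmb⟩ := h2
  have hba : G.s b = G.r a := by
    rw [hmb, G.s_comp ν b hb] at ha; exact ha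
  refine ⟨G.comp b a, ?_, ?_⟩
  · rw [G.r_comp b a hba]; exact hb
  · rw [hla, hmb, G.comp_assoc ν b a hb hba]

lemma r_of_extends {lam μ : G.Path} (h : G.Extends lam μ) : G.r lam = G.r μ := by
  obtain ⟨a, ha, hla⟩ := h; rw [hla, G.r_comp μ a ha]

lemma eq_ident_of_d_eq_zero {p : G.Path} (hp : G.d p = 0) : p = G.ident (G.r p) := by
  obtain ⟨q, hq, huniq⟩ := G.factor p 0 0 (by rw [add_zero]; exact hp)
  have h1 := huniq (G.ident (G.r p), p)
    ⟨G.s_ident (G.r p), G.d_ident _, hp, (G.ident_comp p).symm⟩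
  have h2 := huniq (p, G.ident (G.s p))
    ⟨(G.r_ident (G.s p)).symm, hp, G.d_ident _, (G.comp_ident p).symm⟩
  exact (congrArg Prod.fst (h1.trans h2.symm)).symm

lemma first_edge {p : G.Path} {j : Fin k} (hj : 0 < G.d p j) :
    ∃ η, G.d η = eVec j ∧ G.r η = G.r p := by
  obtain ⟨⟨p₁, p₂⟩, ⟨hs, hd1, _, hfac⟩, -⟩ :=
    G.factor p (eVec j) (G.d p - eVec j) (by
      funext j'
      simp only [Pi.add_apply, Pi.sub_apply, eVec_apply]
      by_cases h : j' = j
      · subst h; simp; omega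
      · simp only [if_neg h]; omega)
  exact ⟨p₁, hd1, by rw [hfac, G.r_comp p₁ p₂ hs]⟩

/-- Forward propagation of `j`-edges along a path of pure degree in direction `i`,
using local convexity. -/
lemma propagate (hlc : G.LocallyConvex) (i : Fin k) :
    ∀ (c : ℕ) (ζ : G.Path), G.d ζ i = c → (∀ j, j ≠ i → G.d ζ j = 0) →
    ∀ j, j ≠ i → (∃ η, G.d η = eVec j ∧ G.r η = G.r ζ) →
    ∃ η, G.d η = eVec j ∧ G.r η = G.s ζ := by
  intro c
  induction c with
  | zero =>
    intro ζ hζi hζ0 j hj hη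
    have hd0 : G.d ζ = 0 := by
      funext j'
      by_cases h : j' = i
      · subst h; exact hζi
      · exact hζ0 j' h
    have hζid := G.eq_ident_of_d_eq_zero hd0
    have hs : G.s ζ = G.r ζ := by rw [hζid, G.s_ident, G.r_ident]
    obtain ⟨η, hη1, hη2⟩ := hη
    exact ⟨η, hη1, by rw [hη2, hs]⟩
  | succ c ih =>
    intro ζ hζi hζ0 j hj hη
    obtain ⟨⟨g, ζ'⟩, ⟨hs, hdg, hdζ', hζeq⟩, -⟩ :=
      G.factor ζ (eVec i) (G.d ζ - eVec i) (by
        funext j'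
        simp only [Pi.add_apply, Pi.sub_apply, eVec_apply]
        by_cases h : j' = i
        · subst h; simp; omega
        · simp only [if_neg h]; omega)
    obtain ⟨η, hηd, hηr⟩ := hη
    have hrg : G.r g = G.r ζ := by rw [hζeq, G.r_comp g ζ' hs]
    obtain ⟨⟨η₁, hη₁d, hη₁r⟩, -⟩ :=
      hlc i j (Ne.symm hj) g η hdg hηd (by rw [hrg, ← hηr])
    have hco : ∀ j', G.d ζ j' = eVec i j' + G.d ζ' j' := by
      intro j'
      rw [hζeq, G.d_comp g ζ' hs, Pi.add_apply, hdg]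
    have hζ'i : G.d ζ' i = c := by
      have := hco i; rw [eVec_apply, if_pos rfl] at this; omega
    have hζ'0 : ∀ j', j' ≠ i → G.d ζ' j' = 0 := by
      intro j' hj'
      have := hco j'; rw [eVec_apply, if_neg hj'] at this
      have := hζ0 j' hj'; omega
    obtain ⟨η₂, h2d, h2r⟩ := ih ζ' hζ'i hζ'0 j hj ⟨η₁, hη₁d, by rw [hη₁r, hs]⟩
    exact ⟨η₂, h2d, by rw [h2r, hζeq, G.s_comp g ζ' hs]⟩

/-- Greedy extension to a maximal path below `N`. -/
lemma greedy (N : Fin k → ℕ) :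
    ∀ (n : ℕ) (μ : G.Path), (∀ j, G.d μ j ≤ N j) → (∑ j, (N j - G.d μ j)) ≤ n →
    ∃ lam, G.Extends lam μ ∧ (∀ j, G.d lam j ≤ N j) ∧
      ∀ j, (∃ η, G.d η = eVec j ∧ G.r η = G.s lam) → G.d lam j = N j := by
  intro n
  induction n with
  | zero =>
    intro μ hμN hsum
    refine ⟨μ, G.extends_self μ, hμN, fun j _ => ?_⟩
    have h1 : N j - G.d μ j = 0 :=
      Finset.sum_eq_zero_iff.mp (Nat.le_zero.mp hsum) j (Finset.mem_univ j)
    have := hμN j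
    omega
  | succ n ih =>
    intro μ hμN hsum
    by_cases hc : ∀ j, (∃ η, G.d η = eVec j ∧ G.r η = G.s μ) → G.d μ j = N j
    · exact ⟨μ, G.extends_self μ, hμN, hc⟩
    · push_neg at hc
      obtain ⟨j, ⟨η, hηd, hηr⟩, hne⟩ := hc
      have hlt : G.d μ j < N j := lt_of_le_of_ne (hμN j) hne
      have hsμ : G.s μ = G.r η := hηr.symm
      have hd' : ∀ j', G.d (G.comp μ η) j' = G.d μ j' + (if j' = j then 1 else 0) := by
        intro j'
        rw [G.d_comp μ η hsμ, Pi.add_apply, hηd, eVec_apply]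
      have hd'N : ∀ j', G.d (G.comp μ η) j' ≤ N j' := by
        intro j'
        rw [hd' j']
        by_cases h : j' = j
        · subst h; simp; omega
        · simp only [if_neg h]; exact Nat.add_zero _ ▸ hμN j'
      have hsum' : (∑ j', (N j' - G.d (G.comp μ η) j')) ≤ n := by
        have hlt2 : (∑ j', (N j' - G.d (G.comp μ η) j')) < ∑ j', (N j' - G.d μ j') := by
          apply Finset.sum_lt_sum
          · intro j' _
            rw [hd' j']
            by_cases h : j' = j
            · subst h; simp; omega
            · simp only [if_neg h]; omega
          · exact ⟨j, Finset.mem_univ j, by rw [hd' j]; simp; omega⟩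
        omega
      obtain ⟨lam, h1, h2, h3⟩ := ih (G.comp μ η) hd'N hsum'
      exact ⟨lam, G.extends_trans h1 ⟨η, hsμ, rfl⟩, h2, h3⟩

/-- Any common extension yields a minimal common extension. -/
lemma mce_of_ce {μ ν lam : G.Path} (hμ : G.Extends lam μ) (hν : G.Extends lam ν) :
    (G.MCE μ ν).Nonempty := by
  obtain ⟨a, hsa, hla⟩ := hμ
  obtain ⟨b, hsb, hlb⟩ := hν
  have hdaj : ∀ j, G.d lam j = G.d μ j + G.d a j := by
    intro j; rw [hla, G.d_comp μ a hsa, Pi.add_apply]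
  have hdbj : ∀ j, G.d lam j = G.d ν j + G.d b j := by
    intro j; rw [hlb, G.d_comp ν b hsb, Pi.add_apply]
  have hmj : ∀ j, (G.d μ ⊔ G.d ν) j = max (G.d μ j) (G.d ν j) := by
    intro j; rw [Pi.sup_apply]
  obtain ⟨⟨π, ρ⟩, ⟨hsπ, hdπ, hdρ, hfacπ⟩, huniq⟩ :=
    G.factor lam (G.d μ ⊔ G.d ν) (G.d lam - (G.d μ ⊔ G.d ν)) (by
      funext j
      simp only [Pi.add_apply, Pi.sub_apply, hmj j]
      have := hdaj j; have := hdbj j; omega)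
  have hπext : ∀ x c : G.Path, G.s x = G.r c → lam = G.comp x c →
      (∀ j, G.d lam j = G.d x j + G.d c j) →
      (∀ j, G.d x j ≤ (G.d μ ⊔ G.d ν) j) → G.Extends π x := by
    intro x c hsc hlc' hdcj hxle
    obtain ⟨⟨c₁, c₂⟩, ⟨hsc12, hdc1, hdc2, hc12⟩, -⟩ :=
      G.factor c ((G.d μ ⊔ G.d ν) - G.d x) (G.d lam - (G.d μ ⊔ G.d ν)) (by
        funext j
        simp only [Pi.add_apply, Pi.sub_apply]
        have := hdcj j; have h2 := hxle j
        have h3 : (G.d μ ⊔ G.d ν) j ≤ G.d lam j := by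
          rw [hmj j]; have := hdaj j; have := hdbj j; omega
        omega)
    have hr1 : G.s x = G.r c₁ := by rw [hsc, hc12, G.r_comp c₁ c₂ hsc12]
    have hcomp : lam = G.comp (G.comp x c₁) c₂ := by
      rw [hlc', hc12, G.comp_assoc x c₁ c₂ hr1 hsc12]
    have hdx1 : G.d (G.comp x c₁) = G.d μ ⊔ G.d ν := by
      funext j
      rw [G.d_comp x c₁ hr1, Pi.add_apply, hdc1, Pi.sub_apply]
      have := hxle j; omega
    have hs2 : G.s (G.comp x c₁) = G.r c₂ := by rw [G.s_comp x c₁ hr1, hsc12]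
    have heq := huniq (G.comp x c₁, c₂) ⟨hs2, hdx1, hdc2, hcomp⟩
    exact ⟨c₁, hr1, (congrArg Prod.fst heq).symm⟩
  have hπμ : G.Extends π μ := hπext μ a hsa hla hdaj
    (fun j => by rw [hmj j]; exact le_max_left _ _)
  have hπν : G.Extends π ν := hπext ν b hsb hlb hdbj
    (fun j => by rw [hmj j]; exact le_max_right _ _)
  exact ⟨π, ⟨hπμ, hπν⟩, hdπ⟩

end KGraph

/-- in a locally-convex finitely aligned `k`-graph, every finite
exhaustive set of `Λⁱ` is also exhaustive in `Λ`: `FE(Λⁱ) ⊆ FE(Λ)`. -/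
theorem stmt11 {k : ℕ} (G : KGraph k) (hfa : G.FinitelyAligned)
    (hlc : G.LocallyConvex) (i : Fin k) (v : G.Obj) (E : Set G.Path)
    (hEfin : E.Finite)
    (hEv : ∀ lam ∈ E, G.r lam = v ∧ G.d lam i = 0 ∧ lam ≠ G.ident v)
    (hex : ∀ μ : G.Path, G.r μ = v → G.d μ i = 0 →
      ∃ ν ∈ E, (G.MCE μ ν).Nonempty) :
    ∀ μ : G.Path, G.r μ = v → ∃ ν ∈ E, (G.MCE μ ν).Nonempty := by
  intro μ hrμ
  classical
  set B : Fin k → ℕ := fun j => hEfin.toFinset.sup fun ν => G.d ν j with hBdef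
  have hB : ∀ ν ∈ E, ∀ j, G.d ν j ≤ B j := by
    intro ν hν j
    exact Finset.le_sup (f := fun ν => G.d ν j) (hEfin.mem_toFinset.mpr hν)
  set N : Fin k → ℕ := fun j => if j = i then G.d μ i else G.d μ j + B j with hNdef
  have hμN : ∀ j, G.d μ j ≤ N j := by
    intro j
    rw [hNdef]
    by_cases h : j = i
    · subst h; simp
    · simp only [if_neg h]; omega
  obtain ⟨lam, hlamμ, hlamN, hmax⟩ :=
    G.greedy N (∑ j, (N j - G.d μ j)) μ hμN le_rfl
  have hrlam : G.r lam = v := by rw [G.r_of_extends hlamμ, hrμ]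
  obtain ⟨⟨lam₁, lam₂⟩, ⟨hs12, hd1, hd2, hfac⟩, -⟩ :=
    G.factor lam (fun j => if j = i then 0 else G.d lam j)
      (fun j => if j = i then G.d lam i else 0) (by
        funext j
        by_cases h : j = i
        · subst h; simp
        · simp [h])
  have hd1j : ∀ j, G.d lam₁ j = if j = i then 0 else G.d lam j := by
    intro j; rw [hd1]
  have hd2j : ∀ j, G.d lam₂ j = if j = i then G.d lam i else 0 := by
    intro j; rw [hd2]
  have hr1 : G.r lam₁ = v := by
    rw [← G.r_comp lam₁ lam₂ hs12, ← hfac, hrlam]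
  have hd1i : G.d lam₁ i = 0 := by rw [hd1j i, if_pos rfl]
  obtain ⟨ν, hνE, ρ, hρ⟩ := hex lam₁ hr1 hd1i
  obtain ⟨⟨⟨α, hsα, hρα⟩, hρν⟩, hdρ⟩ := hρ
  have hαj : ∀ j, G.d ρ j = G.d lam₁ j + G.d α j := by
    intro j; rw [hρα, G.d_comp lam₁ α hsα, Pi.add_apply]
  have hρj : ∀ j, G.d ρ j = max (G.d lam₁ j) (G.d ν j) := by
    intro j; rw [hdρ, Pi.sup_apply]
  have hα0 : G.d α = 0 := by
    funext j
    show G.d α j = 0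
    by_cases h : j = i
    · subst h
      have h1 := hαj j
      have h2 := hρj j
      have h3 := (hEv ν hνE).2.1
      omega
    · by_contra hpos
      have hpos' : 0 < G.d α j := Nat.pos_of_ne_zero hpos
      obtain ⟨η, hηd, hηr⟩ := G.first_edge hpos'
      have hη2 : G.r η = G.r lam₂ := by rw [hηr, ← hsα, hs12]
      obtain ⟨η', hη'd, hη'r⟩ := G.propagate hlc i (G.d lam₂ i) lam₂ rfl
        (fun j' hj' => by rw [hd2j j', if_neg hj']) j h ⟨η, hηd, hη2⟩
      have hslam : G.s lam = G.s lam₂ := by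
        rw [hfac, G.s_comp lam₁ lam₂ hs12]
      have hNj := hmax j ⟨η', hη'd, by rw [hη'r, hslam]⟩
      have hlamj1 : G.d lam₁ j = G.d lam j := by rw [hd1j j, if_neg h]
      have hνB : G.d ν j ≤ B j := hB ν hνE j
      have h1 := hαj j
      have h2 := hρj j
      have hNval : N j = G.d μ j + B j := by rw [hNdef]; simp only [if_neg h]
      omega
  have hαident : α = G.ident (G.r α) := G.eq_ident_of_d_eq_zero hα0
  have hρlam₁ : ρ = lam₁ := by
    rw [hρα, hαident, ← hsα, G.comp_ident]
  have hlam1nu : G.Extends lam₁ ν := by rw [← hρlam₁]; exact hρν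
  have hlamlam₁ : G.Extends lam lam₁ := ⟨lam₂, hs12, hfac⟩
  exact ⟨ν, hνE, G.mce_of_ce hlamμ (G.extends_trans hlamlam₁ hlam1nu)⟩
end

section
/- Let Λ be a locally-convex k-graph and v ∈ Λ^0 with vΛ^{e_i} nonempty. Then vΛ^{e_i} is exhaustive in Λ: for every λ ∈ vΛ there exists μ ∈ vΛ^{e_i} with Λ^min(λ, μ) ≠ ∅. -/
section Aux
variable {k : ℕ} {G : KGraph k}

lemma eVec_self (i : Fin k) : eVec i i = 1 := Pi.single_eq_same i 1
lemma eVec_ne {i j : Fin k} (h : j ≠ i) : eVec i j = 0 := Pi.single_eq_of_ne h 1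

lemma deg_zero_ident (lam : G.Path) (hd : G.d lam = 0) :
    lam = G.ident (G.r lam) := by
  have hu := (G.factor lam 0 0 (by simp [hd])).unique
    (y₁ := (G.ident (G.r lam), lam)) (y₂ := (lam, G.ident (G.s lam)))
    ⟨by rw [G.s_ident], G.d_ident _, hd, (G.ident_comp lam).symm⟩
    ⟨by rw [G.r_ident], hd, G.d_ident _, (G.comp_ident lam).symm⟩
  exact congrArg Prod.fst hu.symm

lemma deg_zero_s_eq_r (lam : G.Path) (hd : G.d lam = 0) : G.s lam = G.r lam := by
  conv_lhs => rw [deg_zero_ident lam hd]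
  rw [G.s_ident]

/-- Key lemma: in a locally convex `k`-graph, if `d lam i = 0` and
`r lam Λ^{e_i}` is nonempty, then `s lam Λ^{e_i}` is nonempty. -/
lemma key (hlc : G.LocallyConvex) (i : Fin k) :
    ∀ n : ℕ, ∀ lam : G.Path, (∑ j, G.d lam j) = n → G.d lam i = 0 →
      (∃ μ, G.d μ = eVec i ∧ G.r μ = G.r lam) →
      ∃ η, G.d η = eVec i ∧ G.r η = G.s lam := by
  intro n
  induction n using Nat.strong_induction_on with
  | _ n ih =>
    intro lam hsum hdi hmu
    rcases Nat.eq_zero_or_pos n with hn | hn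
    · have hd0 : G.d lam = 0 := by
        funext j
        have := Finset.sum_eq_zero_iff.mp (hsum.trans hn)
        exact this j (Finset.mem_univ j)
      rw [deg_zero_s_eq_r lam hd0]
      exact hmu
    · -- pick j with d lam j ≠ 0
      have hex : ∃ j, G.d lam j ≠ 0 := by
        by_contra h
        push_neg at h
        have : (∑ j, G.d lam j) = 0 := Finset.sum_eq_zero fun j _ => h j
        omega
      obtain ⟨j, hj⟩ := hex
      have hij : j ≠ i := fun h => hj (h ▸ hdi)
      have hdecomp : G.d lam = (G.d lam - eVec j) + eVec j := by
        funext l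
        by_cases hl : l = j
        · subst hl
          simp [eVec_self]
          omega
        · simp [eVec_ne hl]
      obtain ⟨⟨p1, p2⟩, ⟨hsr, hd1, hd2, hcomp⟩, -⟩ := G.factor lam _ _ hdecomp
      have hd1i : G.d p1 i = 0 := by
        rw [hd1]
        simp [eVec_ne (Ne.symm hij), hdi]
      have hr1 : G.r p1 = G.r lam := by
        rw [hcomp, G.r_comp _ _ hsr]
      have hsumlt : (∑ l, G.d p1 l) < n := by
        have : ∀ l, G.d p1 l ≤ G.d lam l := by
          intro l
          rw [hd1]; exact Nat.sub_le _ _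
        have hle : (∑ l, G.d p1 l) ≤ ∑ l, G.d lam l :=
          Finset.sum_le_sum fun l _ => this l
        have hlt : G.d p1 j < G.d lam j := by
          rw [hd1]; simp [eVec_self]; omega
        have := Finset.sum_lt_sum (fun l (_ : l ∈ Finset.univ) => this l)
          ⟨j, Finset.mem_univ j, hlt⟩
        omega
      obtain ⟨η, hηd, hηr⟩ := ih _ hsumlt p1 rfl hd1i (hr1 ▸ hmu)
      have hrs : G.r η = G.r p2 := by rw [hηr, hsr]
      have := (hlc i j (Ne.symm hij) η p2 hηd hd2 hrs).2
      obtain ⟨η', hη'd, hη'r⟩ := this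
      refine ⟨η', hη'd, ?_⟩
      rw [hη'r, hcomp, G.s_comp _ _ hsr]

end Aux

/-- in a locally-convex `k`-graph, if `vΛ^{e_i}` is nonempty then
it is exhaustive in `Λ`: every `lam ∈ vΛ` has `Λ^min(lam, μ) ≠ ∅` for some
`μ ∈ vΛ^{e_i}`. -/
theorem stmt12 {k : ℕ} (G : KGraph k) (hlc : G.LocallyConvex) (i : Fin k)
    (v : G.Obj) (hne : ∃ μ, G.d μ = eVec i ∧ G.r μ = v) :
    ∀ lam : G.Path, G.r lam = v →
      ∃ μ, G.d μ = eVec i ∧ G.r μ = v ∧ (G.minPairs lam μ).Nonempty := by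
  intro lam hrlam
  by_cases hdi : G.d lam i = 0
  · -- extend lam by an e_i edge
    obtain ⟨α, hαd, hαr⟩ := key hlc i _ lam rfl hdi (hrlam ▸ hne)
    have hsα : G.s lam = G.r α := hαr.symm
    have hdla : G.d (G.comp lam α) = eVec i + G.d lam := by
      rw [G.d_comp _ _ hsα, hαd]; ring
    obtain ⟨⟨μ, β⟩, ⟨hsr, hdμ, hdβ, hcomp⟩, -⟩ := G.factor (G.comp lam α) _ _ hdla
    have hrμ : G.r μ = v := by
      have : G.r (G.comp μ β) = G.r μ := G.r_comp _ _ hsr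
      rw [← hcomp, G.r_comp _ _ hsα, hrlam] at this
      exact this.symm
    refine ⟨μ, hdμ, hrμ, ⟨(α, β), hsα, hsr, hcomp.symm ▸ rfl, ?_⟩⟩
    constructor
    · exact ⟨⟨α, hsα, rfl⟩, ⟨β, hsr, hcomp⟩⟩
    · rw [G.d_comp _ _ hsα, hαd, hdμ]
      funext l
      by_cases hl : l = i
      · subst hl; simp [eVec_self, hdi]
      · simp [eVec_ne hl]
  · -- lam already has an e_i edge at the start
    have hdecomp : G.d lam = eVec i + (G.d lam - eVec i) := by
      funext l
      by_cases hl : l = i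
      · subst hl; simp [eVec_self]; omega
      · simp [eVec_ne hl]
    obtain ⟨⟨μ, β⟩, ⟨hsr, hdμ, hdβ, hcomp⟩, -⟩ := G.factor lam _ _ hdecomp
    have hrμ : G.r μ = v := by
      rw [← hrlam, hcomp, G.r_comp _ _ hsr]
    have hcomp1 : G.comp lam (G.ident (G.s lam)) = G.comp μ β := by
      rw [G.comp_ident, hcomp]
    refine ⟨μ, hdμ, hrμ, ⟨(G.ident (G.s lam), β), (G.r_ident _).symm, hsr,
      hcomp1, ?_⟩⟩
    rw [G.comp_ident]
    constructor
    · exact ⟨⟨G.ident (G.s lam), (G.r_ident _).symm, (G.comp_ident lam).symm⟩,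
        ⟨β, hsr, hcomp⟩⟩
    · rw [hdμ]
      funext l
      by_cases hl : l = i
      · subst hl; simp [eVec_self]; omega
      · simp [eVec_ne hl]
end

section
/- Let Λ be a finitely aligned k-graph and let {w_λ : λ ∈ Λ} be the operators on ℓ²(Λ) defined by w_λ ξ_μ = δ_{s(λ), r(μ)} ξ_{λμ}, where {ξ_μ} is the canonical orthonormal basis. Then each w_λ is bounded with adjoint determined by w_λ* ξ_ν = ξ_η if ν = λη for some η, and w_λ* ξ_ν = 0 otherwise, and {w_λ : λ ∈ Λ} is a Toeplitz–Cuntz–Krieger Λ-family. -/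
open Function

namespace PEquiv

variable {ι κ : Type*}

def graph (f : ι ≃. κ) : Set (ι × κ) := {p | p.2 ∈ f p.1}

section Graph

variable (f : ι ≃. κ)

theorem injective_fst_graph : Injective fun c : f.graph => c.1.1 := by
  rintro ⟨⟨i, j⟩, hj⟩ ⟨⟨i', j'⟩, hj'⟩ (rfl : i = i')
  exact Subtype.ext (Prod.ext rfl (Option.mem_unique hj hj'))

variable {M : Type*} [AddCommMonoid M] (φ : ι → κ → M)

theorem support_elim_subset_range_fst :
    support (fun i => (f i).elim 0 (φ i)) ⊆ Set.range fun c : f.graph => c.1.1 := by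
  intro i hi
  cases h : f i with
  | none => simp [h] at hi
  | some j => exact ⟨⟨(i, j), h⟩, rfl⟩

theorem elim_apply_of_mem_graph (c : f.graph) : (f c.1.1).elim 0 (φ c.1.1) = φ c.1.1 c.1.2 := by
  rw [c.2]; rfl

variable [TopologicalSpace M]

theorem summable_elim_iff :
    Summable (fun i => (f i).elim 0 (φ i)) ↔ Summable fun c : f.graph => φ c.1.1 c.1.2 := by
  rw [← (injective_fst_graph f).summable_iff fun i hi => by_contra fun h =>
    hi (support_elim_subset_range_fst f φ h)]
  simp only [comp_def, elim_apply_of_mem_graph]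

theorem tsum_elim : ∑' i, (f i).elim 0 (φ i) = ∑' c : f.graph, φ c.1.1 c.1.2 := by
  rw [← (injective_fst_graph f).tsum_eq (support_elim_subset_range_fst f φ)]
  simp only [elim_apply_of_mem_graph]

def graphSymmEquiv : f.symm.graph ≃ f.graph :=
  (Equiv.prodComm κ ι).subtypeEquiv fun _ => f.mem_iff_mem

theorem summable_elim_symm_iff :
    Summable (fun j => (f.symm j).elim 0 (φ · j)) ↔
      Summable fun c : f.graph => φ c.1.1 c.1.2 := by
  rw [summable_elim_iff f.symm fun j i => φ i j, ← (graphSymmEquiv f).summable_iff]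
  rfl

theorem tsum_elim_symm :
    ∑' j, (f.symm j).elim 0 (φ · j) = ∑' c : f.graph, φ c.1.1 c.1.2 := by
  rw [tsum_elim f.symm fun j i => φ i j, ← (graphSymmEquiv f).tsum_eq]
  rfl

end Graph

section lp

variable {E : Type*} [NormedAddCommGroup E] (f : ι ≃. κ)

theorem norm_rpow_elim_symm {r : ℝ} (hr : 0 < r) (x : ι → E) (j : κ) :
    ‖(f.symm j).elim 0 x‖ ^ r = (f.symm j).elim 0 fun i => ‖x i‖ ^ r := by
  cases f.symm j <;> simp [Real.zero_rpow hr.ne']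

theorem memℓp_elim_symm {p : ENNReal} (hp : 0 < p.toReal) {x : ι → E} (hx : Memℓp x p) :
    Memℓp (fun j => (f.symm j).elim 0 x) p := by
  refine memℓp_gen ?_
  simp only [norm_rpow_elim_symm f hp]
  rw [summable_elim_symm_iff f fun i _ => ‖x i‖ ^ p.toReal]
  exact (hx.summable hp).comp_injective (injective_fst_graph f)

theorem tsum_norm_rpow_elim_symm_le {p : ENNReal} (hp : 0 < p.toReal) {x : ι → E}
    (hx : Memℓp x p) :
    ∑' j, ‖(f.symm j).elim 0 x‖ ^ p.toReal ≤ ∑' i, ‖x i‖ ^ p.toReal := by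
  simp only [norm_rpow_elim_symm f hp]
  rw [tsum_elim_symm f fun i _ => ‖x i‖ ^ p.toReal]
  exact tsum_comp_le_tsum_of_inj (hx.summable hp) (fun _ => by positivity) (injective_fst_graph f)

variable (𝕜 : Type*) [NormedField 𝕜] [NormedSpace 𝕜 E]

noncomputable def lpMap : lp (fun _ : ι => E) 2 →L[𝕜] lp (fun _ : κ => E) 2 :=
  LinearMap.mkContinuous
    { toFun := fun x => ⟨fun j => (f.symm j).elim 0 x, f.memℓp_elim_symm (by norm_num) x.2⟩
      map_add' := fun x y => lp.ext <| funext fun j => by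
        change (f.symm j).elim 0 ⇑(x + y) = (f.symm j).elim 0 x + (f.symm j).elim 0 y
        cases f.symm j
        · exact (add_zero 0).symm
        · rfl
      map_smul' := fun c x => lp.ext <| funext fun j => by
        change (f.symm j).elim 0 ⇑(c • x) = c • (f.symm j).elim 0 x
        cases f.symm j <;> simp }
    1 fun x => by
      rw [one_mul]
      refine lp.norm_le_of_tsum_le (by norm_num) (norm_nonneg x) ?_
      rw [lp.norm_rpow_eq_tsum (by norm_num)]
      exact f.tsum_norm_rpow_elim_symm_le (by norm_num) x.2

variable {𝕜}

theorem lpMap_apply (x : lp (fun _ : ι => E) 2) (j : κ) :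
    f.lpMap 𝕜 x j = (f.symm j).elim 0 x := rfl

theorem lpMap_single [DecidableEq ι] [DecidableEq κ] (i : ι) (a : E) :
    f.lpMap 𝕜 (lp.single 2 i a) = (f i).elim 0 fun j => lp.single 2 j a := by
  ext j
  have hx : (f.symm j).elim 0 (Pi.single i a) = if f.symm j = some i then a else 0 := by
    cases f.symm j <;> simp [Pi.single_apply]
  have hy : ((f i).elim 0 fun j' => lp.single 2 j' a : lp (fun _ : κ => E) 2) j =
      if f i = some j then a else 0 := by
    cases f i <;> simp [Pi.single_apply, eq_comm]
  rw [lpMap_apply, lp.coeFn_single, hx, hy]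
  exact if_congr f.eq_some_iff rfl rfl

theorem lpMap_trans {ν : Type*} (g : κ ≃. ν) :
    (f.trans g).lpMap 𝕜 (E := E) = (g.lpMap 𝕜).comp (f.lpMap 𝕜) := by
  ext x j
  rw [lpMap_apply, ContinuousLinearMap.comp_apply, lpMap_apply, symm_trans_rev]
  change ((g.symm j).bind f.symm).elim 0 x = _
  cases g.symm j <;> rfl

theorem lpMap_bot : (⊥ : ι ≃. κ).lpMap 𝕜 (E := E) = 0 := by
  ext x j
  rfl

theorem lpMap_eq_sum {α : Type*} (g : α → ι ≃. κ) (s : Finset α)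
    (hunion : ∀ i j, j ∈ f i ↔ ∃ a ∈ s, j ∈ g a i)
    (hdisj : ∀ a ∈ s, ∀ b ∈ s, ∀ i i' j, j ∈ g a i → j ∈ g b i' → a = b) :
    f.lpMap 𝕜 (E := E) = ∑ a ∈ s, (g a).lpMap 𝕜 := by
  ext x j
  rw [lpMap_apply, _root_.sum_apply, lp.coeFn_sum, Finset.sum_apply]
  simp only [lpMap_apply]
  cases h : f.symm j with
  | none =>
    refine (Finset.sum_eq_zero fun a ha => ?_).symm
    cases hg : (g a).symm j with
    | none => rfl
    | some i =>
      have hi : i ∈ f.symm j :=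
        f.mem_iff_mem.2 ((hunion i j).2 ⟨a, ha, (g a).mem_iff_mem.1 hg⟩)
      simp [h] at hi
  | some i =>
    obtain ⟨a, ha, hai⟩ := (hunion i j).1 (f.mem_iff_mem.1 h)
    have hb : ∀ b ∈ s, b ≠ a → ((g b).symm j).elim 0 x = 0 := fun b hb hba => by
      cases hg : (g b).symm j with
      | none => rfl
      | some i' => exact absurd (hdisj a ha b hb i i' j hai ((g b).mem_iff_mem.1 hg)).symm hba
    rw [Finset.sum_eq_single_of_mem a ha hb, Option.mem_def.1 ((g a).mem_iff_mem.2 hai)]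

end lp

section Adjoint

variable {𝕜 E : Type*} [RCLike 𝕜] [NormedAddCommGroup E] [InnerProductSpace 𝕜 E]
  [CompleteSpace E] (f : ι ≃. κ)

theorem adjoint_lpMap :
    ContinuousLinearMap.adjoint (f.lpMap 𝕜 (E := E)) = f.symm.lpMap 𝕜 := by
  refine ((ContinuousLinearMap.eq_adjoint_iff _ _).2 fun x y => ?_).symm
  have hx : ∀ i, inner 𝕜 (f.symm.lpMap 𝕜 x i) (y i) =
      (f i).elim 0 fun j => inner 𝕜 (x j) (y i) :=
    fun i => by cases h : f i <;> simp [lpMap_apply, h]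
  have hy : ∀ j, inner 𝕜 (x j) (f.lpMap 𝕜 y j) =
      (f.symm j).elim 0 fun i => inner 𝕜 (x j) (y i) :=
    fun j => by cases h : f.symm j <;> simp [lpMap_apply, h]
  rw [lp.inner_eq_tsum, lp.inner_eq_tsum, tsum_congr hx, tsum_congr hy, tsum_elim, tsum_elim_symm]

end Adjoint

section ofSet

variable {s t : Set ι} [DecidablePred (· ∈ s)] [DecidablePred (· ∈ t)]

theorem ofSet_trans_self : (ofSet s).trans (ofSet s) = ofSet s := by
  ext i j
  simp +contextual [trans_eq_some]

theorem ofSet_trans_ofSet_eq_bot (h : Disjoint s t) : (ofSet s).trans (ofSet t) = ⊥ := by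
  ext i j
  simp only [trans_eq_some, ofSet_eq_some_iff, bot_apply, reduceCtorEq, iff_false]
  rintro ⟨_, ⟨rfl, hs⟩, rfl, ht⟩
  exact Set.disjoint_left.1 h hs ht

end ofSet

end PEquiv

namespace KGraph

variable {k : ℕ} (G : KGraph k)

theorem eq_and_eq_of_comp_eq_comp {γ δ γ' δ' : G.Path} (h : G.s γ = G.r δ)
    (h' : G.s γ' = G.r δ') (hd : G.d γ = G.d γ') (hc : G.comp γ δ = G.comp γ' δ') :
    γ = γ' ∧ δ = δ' := by
  have hd' : G.d δ = G.d δ' := by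
    have := G.d_comp γ' δ' h'
    rw [← hc, G.d_comp γ δ h, hd] at this
    exact add_left_cancel this
  obtain ⟨p, -, hp⟩ := G.factor (G.comp γ δ) (G.d γ) (G.d δ) (G.d_comp γ δ h)
  exact Prod.ext_iff.1 <| (hp (γ, δ) ⟨h, rfl, rfl, rfl⟩).trans
    (hp (γ', δ') ⟨h', hd.symm, hd'.symm, hc⟩).symm

theorem comp_left_cancel_s15 {γ δ δ' : G.Path} (h : G.s γ = G.r δ) (h' : G.s γ = G.r δ')
    (hc : G.comp γ δ = G.comp γ δ') : δ = δ' :=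
  (G.eq_and_eq_of_comp_eq_comp h h' rfl hc).2

theorem exists_comp_eq_of_le {ρ : G.Path} {n : Fin k → ℕ} (h : n ≤ G.d ρ) :
    ∃ α τ, G.s α = G.r τ ∧ G.d α = n ∧ G.comp α τ = ρ := by
  obtain ⟨⟨α, τ⟩, ⟨hs, hd, -, hc⟩, -⟩ :=
    G.factor ρ n (G.d ρ - n) (add_tsub_cancel_of_le h).symm
  exact ⟨α, τ, hs, hd, hc.symm⟩

open Classical in
noncomputable def shift (lam : G.Path) : G.Path ≃. G.Path where
  toFun μ := if G.s lam = G.r μ then some (G.comp lam μ) else none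
  invFun ν := if h : G.Extends ν lam then some h.choose else none
  inv μ ν := by
    split_ifs with hν hμ hμ
    · obtain ⟨hs, hc⟩ := hν.choose_spec
      simp only [Option.some.injEq]
      exact ⟨fun h => h ▸ hc.symm, fun h => G.comp_left_cancel_s15 hs hμ (hc.symm.trans h.symm)⟩
    · simp only [Option.some.injEq, iff_false]
      rintro rfl
      exact hμ hν.choose_spec.1
    · simp only [Option.some.injEq, false_iff]
      rintro rfl
      exact hν ⟨μ, hμ, rfl⟩
    · simp

open Classical in
theorem shift_apply (lam μ : G.Path) :
    G.shift lam μ = if G.s lam = G.r μ then some (G.comp lam μ) else none := rfl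

theorem mem_shift_iff {lam μ ν : G.Path} :
    ν ∈ G.shift lam μ ↔ G.s lam = G.r μ ∧ G.comp lam μ = ν := by
  rw [shift_apply]
  split_ifs with h <;> simp [h]

theorem mem_shift_symm_iff {lam μ ν : G.Path} :
    μ ∈ (G.shift lam).symm ν ↔ G.s lam = G.r μ ∧ G.comp lam μ = ν :=
  (G.shift lam).mem_iff_mem.trans G.mem_shift_iff

theorem shift_symm_eq_none {lam ν : G.Path} (h : ¬ G.Extends ν lam) :
    (G.shift lam).symm ν = none :=
  Option.eq_none_iff_forall_not_mem.2 fun μ hμ =>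
    h <| have ⟨hs, hc⟩ := G.mem_shift_symm_iff.1 hμ; ⟨μ, hs, hc.symm⟩

open Classical in
theorem shift_ident (v : G.Obj) : G.shift (G.ident v) = PEquiv.ofSet {μ | G.r μ = v} := by
  ext μ ν
  rw [← Option.mem_def, ← Option.mem_def, mem_shift_iff, PEquiv.mem_ofSet_iff, G.s_ident]
  constructor
  · rintro ⟨rfl, rfl⟩
    rw [G.ident_comp]
    exact ⟨rfl, rfl⟩
  · rintro ⟨rfl, rfl⟩
    exact ⟨rfl, G.ident_comp ν⟩

theorem shift_comp {μ ν : G.Path} (h : G.s μ = G.r ν) :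
    G.shift (G.comp μ ν) = (G.shift ν).trans (G.shift μ) := by
  ext ρ ξ
  rw [← Option.mem_def, ← Option.mem_def, mem_shift_iff, PEquiv.mem_trans]
  simp only [mem_shift_iff]
  constructor
  · rintro ⟨hs, rfl⟩
    rw [G.s_comp μ ν h] at hs
    exact ⟨_, ⟨hs, rfl⟩, (G.r_comp ν ρ hs).symm ▸ h, (G.comp_assoc μ ν ρ h hs).symm⟩
  · rintro ⟨_, ⟨hs, rfl⟩, -, rfl⟩
    exact ⟨(G.s_comp μ ν h).trans hs, G.comp_assoc μ ν ρ h hs⟩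

theorem comp_eq_comp_iff_exists_mem_minPairs {μ ν ρ σ : G.Path} :
    (G.s μ = G.r ρ ∧ G.s ν = G.r σ ∧ G.comp μ ρ = G.comp ν σ) ↔
      ∃ p ∈ G.minPairs μ ν, ∃ τ, G.s p.1 = G.r τ ∧ G.s p.2 = G.r τ ∧
        G.comp p.1 τ = ρ ∧ G.comp p.2 τ = σ := by
  constructor
  · rintro ⟨hρ, hσ, hc⟩
    have hd : G.d μ + G.d ρ = G.d ν + G.d σ := by
      rw [← G.d_comp μ ρ hρ, hc, G.d_comp ν σ hσ]
    have hm : G.d μ ⊔ G.d ν ≤ G.d μ + G.d ρ := sup_le le_self_add (hd ▸ le_self_add)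
    obtain ⟨α, τ, hατ, hdα, rfl⟩ :=
      G.exists_comp_eq_of_le (n := G.d μ ⊔ G.d ν - G.d μ) (tsub_le_iff_left.2 hm)
    obtain ⟨β, τ', hβτ, hdβ, rfl⟩ :=
      G.exists_comp_eq_of_le (n := G.d μ ⊔ G.d ν - G.d ν) (tsub_le_iff_left.2 (hd ▸ hm))
    have hμα : G.s μ = G.r α := hρ.trans (G.r_comp α τ hατ)
    have hνβ : G.s ν = G.r β := hσ.trans (G.r_comp β τ' hβτ)
    have hdμα : G.d (G.comp μ α) = G.d μ ⊔ G.d ν := by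
      rw [G.d_comp μ α hμα, hdα, add_tsub_cancel_of_le le_sup_left]
    have hdνβ : G.d (G.comp ν β) = G.d μ ⊔ G.d ν := by
      rw [G.d_comp ν β hνβ, hdβ, add_tsub_cancel_of_le le_sup_right]
    -- `(μα, τ)` and `(νβ, τ')` both factorise `μρ = νσ` at degree `d μ ⊔ d ν`
    obtain ⟨hαβ, rfl⟩ := G.eq_and_eq_of_comp_eq_comp ((G.s_comp μ α hμα).trans hατ)
      ((G.s_comp ν β hνβ).trans hβτ) (hdμα.trans hdνβ.symm)
      (by rw [G.comp_assoc μ α τ hμα hατ, G.comp_assoc ν β τ' hνβ hβτ, hc])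
    have hmin : (α, β) ∈ G.minPairs μ ν :=
      ⟨hμα, hνβ, hαβ, ⟨⟨α, hμα, rfl⟩, β, hνβ, hαβ⟩, hdμα⟩
    exact ⟨(α, β), hmin, τ, hατ, hβτ, rfl, rfl⟩
  · rintro ⟨p, ⟨hμ, hν, hc, -⟩, τ, h₁, h₂, rfl, rfl⟩
    refine ⟨hμ.trans (G.r_comp _ _ h₁).symm, hν.trans (G.r_comp _ _ h₂).symm, ?_⟩
    rw [← G.comp_assoc μ p.1 τ hμ h₁, hc, G.comp_assoc ν p.2 τ hν h₂]

theorem eq_of_mem_minPairs_of_comp_eq {μ ν τ τ' : G.Path} {p q : G.Path × G.Path}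
    (hp : p ∈ G.minPairs μ ν) (hq : q ∈ G.minPairs μ ν) (hτ : G.s p.1 = G.r τ)
    (hτ' : G.s q.1 = G.r τ') (h : G.comp p.1 τ = G.comp q.1 τ') : p = q := by
  have hd : ∀ {p}, p ∈ G.minPairs μ ν → G.d μ + G.d p.1 = G.d μ ⊔ G.d ν :=
    fun ⟨hμ, _, _, _, hd⟩ => (G.d_comp μ _ hμ).symm.trans hd
  have h₁ : p.1 = q.1 :=
    (G.eq_and_eq_of_comp_eq_comp hτ hτ' (add_left_cancel ((hd hp).trans (hd hq).symm)) h).1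
  obtain ⟨-, hνp, hcp, -⟩ := hp
  obtain ⟨-, hνq, hcq, -⟩ := hq
  exact Prod.ext h₁ (G.comp_left_cancel_s15 hνp hνq (by rw [← hcp, ← hcq, h₁]))

variable {𝕜 E : Type*} [NormedField 𝕜] [NormedAddCommGroup E] [NormedSpace 𝕜 E]

theorem lpMap_shift_symm_comp_lpMap_shift {μ ν : G.Path} (h : (G.minPairs μ ν).Finite) :
    ((G.shift μ).symm.lpMap 𝕜).comp ((G.shift ν).lpMap 𝕜) =
      ∑ p ∈ h.toFinset,
        ((G.shift p.1).lpMap 𝕜).comp ((G.shift p.2).symm.lpMap 𝕜 (E := E)) := by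
  simp only [← PEquiv.lpMap_trans]
  refine PEquiv.lpMap_eq_sum _ _ _ (fun σ ρ => ?_) fun p hp q hq σ σ' ρ hpρ hqρ => ?_
  · simp only [PEquiv.mem_trans, mem_shift_iff, mem_shift_symm_iff, Set.Finite.mem_toFinset]
    constructor
    · rintro ⟨_, ⟨hσ, rfl⟩, hρ, hc⟩
      obtain ⟨p, hp, τ, h₁, h₂, h₁τ, h₂τ⟩ :=
        G.comp_eq_comp_iff_exists_mem_minPairs.1 ⟨hρ, hσ, hc⟩
      exact ⟨p, hp, τ, ⟨h₂, h₂τ⟩, h₁, h₁τ⟩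
    · rintro ⟨p, hp, τ, ⟨h₂, h₂τ⟩, h₁, h₁τ⟩
      obtain ⟨hρ, hσ, hc⟩ :=
        G.comp_eq_comp_iff_exists_mem_minPairs.2 ⟨p, hp, τ, h₁, h₂, h₁τ, h₂τ⟩
      exact ⟨_, ⟨hσ, rfl⟩, hρ, hc⟩
  · simp only [PEquiv.mem_trans, mem_shift_iff, mem_shift_symm_iff] at hpρ hqρ
    obtain ⟨τ, -, hτ, rfl⟩ := hpρ
    obtain ⟨τ', -, hτ', h⟩ := hqρ
    exact G.eq_of_mem_minPairs_of_comp_eq ((Set.Finite.mem_toFinset _).1 hp)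
      ((Set.Finite.mem_toFinset _).1 hq) hτ hτ' h.symm

end KGraph

open Classical in
/-- for a finitely aligned `k`-graph `Λ` there are bounded
operators `w_lam` on `ℓ²(Λ)` with `w_lam ξ_μ = δ_{s(lam), r(μ)} ξ_{lam μ}`,
whose adjoints satisfy `w_lam* ξ_ν = ξ_η` if `ν = lam η` and `w_lam* ξ_ν = 0`
otherwise, and `{w_lam}` is a Toeplitz–Cuntz–Krieger `Λ`-family. -/
theorem stmt15 {k : ℕ} (G : KGraph k) (hfa : G.FinitelyAligned) :
    ∃ w : G.Path → (lp (fun _ : G.Path => ℂ) 2 →L[ℂ] lp (fun _ : G.Path => ℂ) 2),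
      (∀ lam μ : G.Path,
        w lam (lp.single 2 μ (1 : ℂ)) =
          if G.s lam = G.r μ then lp.single 2 (G.comp lam μ) (1 : ℂ) else 0) ∧
      (∀ lam ν η : G.Path, G.s lam = G.r η → ν = G.comp lam η →
        ContinuousLinearMap.adjoint (w lam) (lp.single 2 ν (1 : ℂ)) =
          lp.single 2 η (1 : ℂ)) ∧
      (∀ lam ν : G.Path, ¬ G.Extends ν lam →
        ContinuousLinearMap.adjoint (w lam) (lp.single 2 ν (1 : ℂ)) = 0) ∧
      (∀ v : G.Obj, ContinuousLinearMap.adjoint (w (G.ident v)) = w (G.ident v)) ∧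
      (∀ v : G.Obj, w (G.ident v) ∘L w (G.ident v) = w (G.ident v)) ∧
      (∀ v v' : G.Obj, v ≠ v' → w (G.ident v) ∘L w (G.ident v') = 0) ∧
      (∀ μ ν : G.Path, G.s μ = G.r ν → w (G.comp μ ν) = w μ ∘L w ν) ∧
      (∀ μ ν : G.Path,
        ContinuousLinearMap.adjoint (w μ) ∘L w ν =
          ∑ p ∈ (hfa μ ν).toFinset,
            w p.1 ∘L ContinuousLinearMap.adjoint (w p.2)) := by
  refine ⟨fun lam => (G.shift lam).lpMap ℂ, fun lam μ => ?_, fun lam ν η hη hν => ?_,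
    fun lam ν hν => ?_, fun v => ?_, fun v => ?_, fun v v' hv => ?_, fun μ ν h => ?_,
    fun μ ν => ?_⟩ <;> beta_reduce
  · rw [PEquiv.lpMap_single, KGraph.shift_apply]
    split_ifs <;> rfl
  · rw [PEquiv.adjoint_lpMap, PEquiv.lpMap_single,
      Option.mem_def.1 (G.mem_shift_symm_iff.2 ⟨hη, hν.symm⟩)]
    rfl
  · rw [PEquiv.adjoint_lpMap, PEquiv.lpMap_single, G.shift_symm_eq_none hν]
    rfl
  · rw [PEquiv.adjoint_lpMap, G.shift_ident, PEquiv.ofSet_symm]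
  · rw [← PEquiv.lpMap_trans, G.shift_ident, PEquiv.ofSet_trans_self]
  · rw [← PEquiv.lpMap_trans, G.shift_ident, G.shift_ident,
      PEquiv.ofSet_trans_ofSet_eq_bot, PEquiv.lpMap_bot]
    exact Set.disjoint_left.2 fun μ hμ hμ' => hv (hμ'.symm.trans hμ)
  · rw [G.shift_comp h, PEquiv.lpMap_trans]
  · simp only [PEquiv.adjoint_lpMap]
    exact G.lpMap_shift_symm_comp_lpMap_shift (hfa μ ν)
end
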